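/- arXiv:1507.06175 — 4 statements merged into one kernel-verified Lean document; each statement's English description precedes it below -/
import Mathlib

section
/- Fix an integer k ≥ 2. There exists a constant C > 0 (independent of n) such that for all sufficiently large n, there exist an integer N with N ≤ n + C·k²·(log₂ k)·(log₂ n), an injective encoding map Enc : {0,1}^n → {0,1}^N, and a decoding map Dec defined on all binary strings, such that for every message s ∈ {0,1}^n and every binary string s' obtainable from Enc(s) by a combination of insertions and deletions totaling at most k, one has Dec(s') = s. -/
/-- `Subseq k x` is the set of all subsequences of `x` obtained by deleting exactly `k` symbols,
i.e. all subsequences of `x` of length `|x| - k`. -/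
def Subseq {α : Type*} (k : ℕ) (x : List α) : Set (List α) :=
  {y | y.Sublist x ∧ y.length + k = x.length}

/-- `s'` is obtainable from `x` by a combination of insertions and deletions totaling at most `k`:
there is a string `z` that is a subsequence of both `x` and `s'` with
`(|x| - |z|) + (|s'| - |z|) ≤ k`. -/
def InsDel {α : Type*} (k : ℕ) (x s' : List α) : Prop :=
  ∃ z : List α, z.Sublist x ∧ z.Sublist s' ∧
    (x.length - z.length) + (s'.length - z.length) ≤ k


/-
Two codewords more than `2k` apart in insertion/deletion distance cannot both reach a common word
with `k` edits, so such a code decodes `k` edits uniquely. Every word of length `N` within distance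
`2k` of `x` is `x` with `k` deletions and then `k` insertions at chosen positions, so the ball has at
most `(2 (N + 2)²)ᵏ` words; greedily picking codewords outside the balls of the previous ones gives
`2ⁿ` codewords of length `n + r` as soon as `2ʳ` exceeds the ball size, which `r = O(k log n)`
achieves.
-/

theorem List.Sublist.exists_common_sublist {α : Type*} {u v w : List α} (hu : u.Sublist w)
    (hv : v.Sublist w) : ∃ t : List α, t.Sublist u ∧ t.Sublist v ∧
    u.length + v.length ≤ t.length + w.length := by
  induction hu generalizing v with
  | slnil => exact ⟨[], .slnil, List.nil_sublist _, by simp [List.sublist_nil.mp hv]⟩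
  | @cons u w a _ ih =>
    rcases List.sublist_cons_iff.mp hv with hvw | ⟨v, rfl, hvw⟩
    · obtain ⟨t, htu, htv, hlen⟩ := ih hvw
      exact ⟨t, htu, htv, by simp; omega⟩
    · obtain ⟨t, htu, htv, hlen⟩ := ih hvw
      exact ⟨t, htu, htv.cons a, by simp; omega⟩
  | @cons_cons u w a _ ih =>
    rcases List.sublist_cons_iff.mp hv with hvw | ⟨v, rfl, hvw⟩
    · obtain ⟨t, htu, htv, hlen⟩ := ih hvw
      exact ⟨t, htu.cons a, htv, by simp; omega⟩
    · obtain ⟨t, htu, htv, hlen⟩ := ih hvw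
      exact ⟨a :: t, htu.cons_cons a, htv.cons_cons a, by simp; omega⟩

namespace InsDel

variable {α : Type*}

theorem refl (k : ℕ) (x : List α) : InsDel k x x :=
  ⟨x, .refl x, .refl x, by simp⟩

theorem symm {k : ℕ} {x y : List α} (h : InsDel k x y) : InsDel k y x :=
  let ⟨z, hzx, hzy, hk⟩ := h
  ⟨z, hzy, hzx, by omega⟩

theorem trans {k₁ k₂ : ℕ} {x y z : List α} (h₁ : InsDel k₁ x y) (h₂ : InsDel k₂ y z) :
    InsDel (k₁ + k₂) x z := by
  obtain ⟨u, hux, huy, hk₁⟩ := h₁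
  obtain ⟨v, hvy, hvz, hk₂⟩ := h₂
  obtain ⟨t, htu, htv, hlen⟩ := huy.exists_common_sublist hvy
  have := hux.length_le; have := hvz.length_le; have := htu.length_le; have := htv.length_le
  exact ⟨t, htu.trans hux, htv.trans hvz, by omega⟩

end InsDel

section EditScripts

variable {α : Type*}

def eraseIdxs (x : List α) (is : List ℕ) : List α :=
  is.foldl List.eraseIdx x

def insertIdxs (x : List α) (ops : List (ℕ × α)) : List α :=
  ops.foldl (fun l p => l.insertIdx p.1 p.2) x

theorem eraseIdxs_cons_map_succ (a : α) (x : List α) (is : List ℕ) :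
    eraseIdxs (a :: x) (is.map (· + 1)) = a :: eraseIdxs x is := by
  induction is generalizing x with
  | nil => rfl
  | cons i is ih => exact ih (x.eraseIdx i)

theorem insertIdxs_cons_map_succ (a : α) (x : List α) (ops : List (ℕ × α)) :
    insertIdxs (a :: x) (ops.map fun p => (p.1 + 1, p.2)) = a :: insertIdxs x ops := by
  induction ops generalizing x with
  | nil => rfl
  | cons p ops ih => exact ih (x.insertIdx p.1 p.2)

-- Scripts are padded to exactly `k` steps with out-of-range indices, at which both operations are
-- the identity.
theorem List.Sublist.exists_eraseIdxs {z x : List α} (h : z.Sublist x) {k : ℕ}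
    (hk : x.length ≤ z.length + k) :
    ∃ is : List ℕ, is.length = k ∧ (∀ i ∈ is, i ≤ x.length) ∧ eraseIdxs x is = z := by
  induction h generalizing k with
  | slnil =>
    refine ⟨List.replicate k 0, by simp, fun i hi => by simp_all, ?_⟩
    induction k <;> simp_all [eraseIdxs, List.replicate_succ]
  | @cons z x a h ih =>
    obtain ⟨k, rfl⟩ : ∃ k', k = k' + 1 := ⟨k - 1, by have := h.length_le; simp at hk; omega⟩
    obtain ⟨is, hlen, hbound, rfl⟩ := ih (k := k) (by simp at hk; omega)
    refine ⟨0 :: is, by simp [hlen], ?_, rfl⟩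
    simp only [List.mem_cons, List.length_cons, forall_eq_or_imp]
    exact ⟨by omega, fun i hi => by have := hbound i hi; omega⟩
  | @cons_cons z x a h ih =>
    obtain ⟨is, hlen, hbound, rfl⟩ := ih (k := k) (by simp at hk; omega)
    refine ⟨is.map (· + 1), by simp [hlen], ?_, eraseIdxs_cons_map_succ a x is⟩
    simpa using hbound

theorem List.Sublist.exists_insertIdxs [Inhabited α] {z y : List α} (h : z.Sublist y) {k : ℕ}
    (hk : y.length ≤ z.length + k) :
    ∃ ops : List (ℕ × α), ops.length = k ∧ (∀ p ∈ ops, p.1 ≤ y.length + 1) ∧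
      insertIdxs z ops = y := by
  induction h generalizing k with
  | slnil =>
    refine ⟨List.replicate k (1, default), by simp, fun p hp => by simp_all, ?_⟩
    induction k <;> simp_all [insertIdxs, List.replicate_succ]
  | @cons z y a h ih =>
    obtain ⟨k, rfl⟩ : ∃ k', k = k' + 1 := ⟨k - 1, by have := h.length_le; simp at hk; omega⟩
    obtain ⟨ops, hlen, hbound, hy⟩ := ih (k := k) (by simp at hk; omega)
    refine ⟨ops ++ [(0, a)], by simp [hlen], ?_, by simpa [insertIdxs] using hy⟩
    simp only [List.mem_append, List.mem_singleton, List.length_cons]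
    rintro p (hp | rfl)
    · have := hbound p hp; omega
    · simp
  | @cons_cons z y a h ih =>
    obtain ⟨ops, hlen, hbound, rfl⟩ := ih (k := k) (by simp at hk; omega)
    refine ⟨ops.map fun p => (p.1 + 1, p.2), by simp [hlen], ?_, insertIdxs_cons_map_succ a z ops⟩
    simp only [List.mem_map, List.length_cons]
    rintro _ ⟨p, hp, rfl⟩
    exact Nat.add_le_add_right (hbound p hp) 1

end EditScripts

theorem mem_image_ofFn_piFinset {β : Type*} [DecidableEq β] {s : Finset β} {k : ℕ}
    {l : List β} (hl : l.length = k) (hs : ∀ b ∈ l, b ∈ s) :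
    l ∈ (Fintype.piFinset fun _ : Fin k => s).image List.ofFn := by
  subst hl
  exact Finset.mem_image.mpr ⟨fun i => l[i],
    Fintype.mem_piFinset.mpr fun i => hs _ (List.getElem_mem _), List.ofFn_getElem⟩

open Classical in
theorem card_insDel_ball_le {α : Type*} [Fintype α] [Inhabited α] (k : ℕ)
    {N : ℕ} (x : List.Vector α N) :
    (Finset.univ.filter fun y : List.Vector α N => InsDel (2 * k) x.1 y.1).card ≤
      (N + 1) ^ k * ((N + 2) * Fintype.card α) ^ k := by
  set deletions := (Fintype.piFinset fun _ : Fin k => Finset.range (N + 1)).image List.ofFn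
  set insertions :=
    (Fintype.piFinset fun _ : Fin k => Finset.range (N + 2) ×ˢ (Finset.univ : Finset α)).image
      List.ofFn
  set edits := (deletions ×ˢ insertions).image fun p => insertIdxs (eraseIdxs x.1 p.1) p.2
  set ball := Finset.univ.filter fun y : List.Vector α N => InsDel (2 * k) x.1 y.1
  have hmaps : Set.MapsTo Subtype.val (ball : Set (List.Vector α N)) (edits : Set (List α)) := by
    rintro y hy
    obtain ⟨z, hzx, hzy, hlen⟩ := (Finset.mem_filter.mp hy).2
    have hx := x.2
    have hy := y.2
    obtain ⟨is, his, hisN, rfl⟩ := hzx.exists_eraseIdxs (k := k) (by omega)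
    obtain ⟨ops, hops, hopsN, hz⟩ := hzy.exists_insertIdxs (k := k) (by omega)
    refine Finset.mem_image.mpr ⟨(is, ops), Finset.mem_product.mpr ⟨?_, ?_⟩, hz⟩
    · exact mem_image_ofFn_piFinset his fun i hi => Finset.mem_range.mpr (by grind)
    · exact mem_image_ofFn_piFinset hops fun p hp =>
        Finset.mem_product.mpr ⟨Finset.mem_range.mpr (by grind), Finset.mem_univ _⟩
  calc _ ≤ _ := Finset.card_le_card_of_injOn Subtype.val hmaps Subtype.val_injective.injOn
    _ ≤ deletions.card * insertions.card := Finset.card_image_le.trans (Finset.card_product _ _).le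
    _ ≤ _ := by
      gcongr
      · exact Finset.card_image_le.trans (by simp)
      · exact Finset.card_image_le.trans (by simp)

theorem exists_card_eq_pairwise_not_rel {β : Type*} [Fintype β] [DecidableEq β]
    (R : β → β → Prop) [DecidableRel R] (hrefl : ∀ x, R x x)
    (hsymm : ∀ x y, R x y → R y x) {B : ℕ}
    (hB : 0 < B) (hball : ∀ x, (Finset.univ.filter (R x)).card ≤ B) (m : ℕ)
    (hm : m * B ≤ Fintype.card β) :
    ∃ T : Finset β, T.card = m ∧ (T : Set β).Pairwise fun x y => ¬ R x y := by
  induction m with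
  | zero => exact ⟨∅, by simp, by simp⟩
  | succ m ih =>
    obtain ⟨T, hcard, hT⟩ := ih (le_trans (by gcongr; omega) hm)
    set covered := T.biUnion fun x => Finset.univ.filter (R x)
    have hcovered : covered.card < (Finset.univ : Finset β).card :=
      calc covered.card ≤ ∑ x ∈ T, (Finset.univ.filter (R x)).card := Finset.card_biUnion_le
        _ ≤ T.card • B := Finset.sum_le_card_nsmul _ _ _ fun x _ => hball x
        _ < (m + 1) * B := by rw [hcard, smul_eq_mul]; nlinarith
        _ ≤ _ := hm
    obtain ⟨a, -, ha_covered⟩ := Finset.exists_mem_notMem_of_card_lt_card hcovered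
    have hfar : ∀ x ∈ T, ¬ R x a := fun x hx h => ha_covered (Finset.mem_biUnion.mpr ⟨x, hx, by simpa⟩)
    have haT : a ∉ T := fun ha => hfar a ha (hrefl a)
    refine ⟨insert a T, by rw [Finset.card_insert_of_notMem haT, hcard], ?_⟩
    rw [Finset.coe_insert, Set.pairwise_insert]
    exact ⟨hT, fun x hx _ => ⟨fun h => hfar x hx (hsymm _ _ h), hfar x hx⟩⟩

theorem exists_insDel_code (k n r : ℕ) (hr : (2 * (n + r + 2) ^ 2) ^ k ≤ 2 ^ r) :
    ∃ Enc : List Bool → List Bool, (∀ s, s.length = n → (Enc s).length = n + r) ∧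
      ∀ s, s.length = n → ∀ t, t.length = n → InsDel (2 * k) (Enc s) (Enc t) → s = t := by
  classical
  have hball (x : List.Vector Bool (n + r)) :
      (Finset.univ.filter fun y : List.Vector Bool (n + r) => InsDel (2 * k) x.1 y.1).card ≤
        (2 * (n + r + 2) ^ 2) ^ k := by
    refine (card_insDel_ball_le k x).trans ?_
    rw [Fintype.card_bool, ← mul_pow]
    exact Nat.pow_le_pow_left (by nlinarith) k
  have hcard : 2 ^ n * (2 * (n + r + 2) ^ 2) ^ k ≤ Fintype.card (List.Vector Bool (n + r)) := by
    rw [card_vector, Fintype.card_bool, pow_add]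
    gcongr
  obtain ⟨T, hTcard, hT⟩ := exists_card_eq_pairwise_not_rel
    (fun x y : List.Vector Bool (n + r) => InsDel (2 * k) x.1 y.1) (fun x => InsDel.refl _ _)
    (fun _ _ h => h.symm) (by positivity) hball (2 ^ n) hcard
  let e : List.Vector Bool n ≃ T := Fintype.equivOfCardEq (by simp [hTcard, card_vector])
  refine ⟨fun s => if h : s.length = n then (e ⟨s, h⟩).1.1 else [], fun s hs => by simp [hs],
    fun s hs t ht hst => ?_⟩
  simp only [hs, ht, dite_true] at hst
  have := hT.eq (e ⟨s, hs⟩).2 (e ⟨t, ht⟩).2 (not_not.mpr hst)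
  exact congrArg Subtype.val (e.injective (Subtype.ext this))

theorem exists_insDel_decoder {β α : Type*} [Inhabited β] {S : Set β} {k : ℕ}
    (Enc : β → List α) (hsep : ∀ s ∈ S, ∀ t ∈ S, InsDel (2 * k) (Enc s) (Enc t) → s = t) :
    ∃ Dec : List α → β, ∀ s ∈ S, ∀ s', InsDel k (Enc s) s' → Dec s' = s := by
  classical
  refine ⟨fun s' => if h : ∃ s ∈ S, InsDel k (Enc s) s' then h.choose else default,
    fun s hs s' hs' => ?_⟩
  have hex : ∃ s ∈ S, InsDel k (Enc s) s' := ⟨s, hs, hs'⟩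
  obtain ⟨htS, ht⟩ := hex.choose_spec
  dsimp only
  rw [dif_pos hex]
  exact hsep _ htS s hs (two_mul k ▸ ht.trans hs'.symm)

theorem insDel_ball_bound_le_two_pow (k n : ℕ) (hn : 6 * k ≤ n) :
    (2 * (n + 5 * k * (Nat.log 2 n + 1) + 2) ^ 2) ^ k ≤ 2 ^ (5 * k * (Nat.log 2 n + 1)) := by
  rcases k.eq_zero_or_pos with rfl | hk
  · simp
  set L := Nat.log 2 n
  have hn2 : n + 1 ≤ 2 ^ (L + 1) := Nat.lt_pow_succ_log_self one_lt_two n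
  have hL : L + 1 ≤ n := Nat.log_lt_self 2 (by omega)
  have hN : n + 5 * k * (L + 1) + 2 ≤ (2 ^ (L + 1)) ^ 2 := by
    have := Nat.pow_le_pow_left hn2 2
    nlinarith
  calc (2 * (n + 5 * k * (L + 1) + 2) ^ 2) ^ k ≤ (2 * ((2 ^ (L + 1)) ^ 2) ^ 2) ^ k := by gcongr
    _ = 2 ^ ((4 * L + 5) * k) := by rw [pow_mul]; ring
    _ ≤ 2 ^ (5 * k * (L + 1)) := Nat.pow_le_pow_right two_pos (by nlinarith)

theorem five_mul_log_add_one_le_logb (k n : ℕ) (hk : 2 ≤ k) (hn : 2 ≤ n) :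
    ((5 * k * (Nat.log 2 n + 1) : ℕ) : ℝ) ≤
      10 * (k : ℝ) ^ 2 * Real.logb 2 k * Real.logb 2 n := by
  have hL : (1 : ℝ) ≤ Nat.log 2 n := by exact_mod_cast Nat.log_pos one_lt_two hn
  have hLn : (Nat.log 2 n : ℝ) ≤ Real.logb 2 n := Real.natLog_le_logb n 2
  have hk1 : (1 : ℝ) ≤ Real.logb 2 k := by
    rw [Real.le_logb_iff_rpow_le one_lt_two (by positivity)]
    exact_mod_cast (by simpa using hk : (2 : ℝ) ≤ k)
  have hk2 : (2 : ℝ) ≤ k := by exact_mod_cast hk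
  push_cast
  calc 5 * (k : ℝ) * (Nat.log 2 n + 1) ≤ 10 * k * 1 * Nat.log 2 n := by nlinarith
    _ ≤ 10 * k ^ 2 * Real.logb 2 k * Real.logb 2 n := by
      gcongr
      nlinarith

theorem stmt_1 (k : ℕ) (hk : 2 ≤ k) :
    ∃ C : ℝ, 0 < C ∧ ∃ n₀ : ℕ, ∀ n : ℕ, n₀ ≤ n →
      ∃ N : ℕ, (N : ℝ) ≤ (n : ℝ) + C * (k : ℝ) ^ 2 * Real.logb 2 k * Real.logb 2 n ∧
        ∃ Enc Dec : List Bool → List Bool,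
          (∀ s : List Bool, s.length = n → (Enc s).length = N) ∧
          (∀ s₁ s₂ : List Bool, s₁.length = n → s₂.length = n → Enc s₁ = Enc s₂ → s₁ = s₂) ∧
          (∀ s : List Bool, s.length = n → ∀ s' : List Bool, InsDel k (Enc s) s' →
            Dec s' = s) := by
  refine ⟨10, by norm_num, 6 * k, fun n hn => ?_⟩
  set r := 5 * k * (Nat.log 2 n + 1)
  obtain ⟨Enc, hlen, hsep⟩ := exists_insDel_code k n r (insDel_ball_bound_le_two_pow k n hn)
  obtain ⟨Dec, hDec⟩ := exists_insDel_decoder (S := {s : List Bool | s.length = n}) Enc hsep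
  refine ⟨n + r, ?_, Enc, Dec, hlen, fun s t hs ht hst => hsep s hs t ht (hst ▸ .refl _ _), hDec⟩
  push_cast
  linarith [five_mul_log_add_one_le_logb k n hk (by omega)]
end

section
/- Fix integers k ≥ 1 and n with n ≥ max(k, 2). There exist an integer m with m ≤ 2k·log₂ n + 2, a hash function hash₁ : {0,1}^n → {0,1}^m, and a decoding map D : {0,1}^{n−k} × {0,1}^m → {0,1}^n, such that for every x ∈ {0,1}^n and every y ∈ σ_k(x), one has D(y, hash₁(x)) = x. -/
open Finset
open scoped Nat List

theorem Nat.choose_mul_two_pow_le (n : ℕ) : ∀ k, n.choose k * 2 ^ k ≤ 2 * n ^ k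
  | 0 => by simp
  | k + 1 => by
    have h2 : 2 ^ k ≤ (k + 1)! := by
      simpa [add_comm] using Nat.factorial_mul_pow_le_factorial (m := 1) (n := k)
    calc n.choose (k + 1) * 2 ^ (k + 1) = 2 * (n.choose (k + 1) * 2 ^ k) := by ring
      _ ≤ 2 * (n.choose (k + 1) * (k + 1)!) := by gcongr
      _ = 2 * n.descFactorial (k + 1) := by
        rw [Nat.descFactorial_eq_factorial_mul_choose, mul_comm (n.choose _)]
      _ ≤ 2 * n ^ (k + 1) := by gcongr; exact Nat.descFactorial_le_pow n _

namespace SimpleGraph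

theorem exists_coloring_of_degree_lt {V α : Type*} [Fintype V] [Fintype α] (G : SimpleGraph V)
    [DecidableRel G.Adj] (h : ∀ v, G.degree v < Fintype.card α) : Nonempty (G.Coloring α) := by
  classical
  rcases isEmpty_or_nonempty V with _ | ⟨⟨v⟩⟩
  · exact ⟨Coloring.mk isEmptyElim fun {v} => isEmptyElim v⟩
  have : Nonempty α := Fintype.card_pos_iff.mp (Nat.zero_lt_of_lt (h v))
  suffices ∀ s : Finset V, ∃ f : V → α, ∀ a ∈ s, ∀ b ∈ s, G.Adj a b → f a ≠ f b by
    obtain ⟨f, hf⟩ := this univ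
    exact ⟨Coloring.mk f fun hab => hf _ (mem_univ _) _ (mem_univ _) hab⟩
  intro s
  induction s using Finset.induction_on with
  | empty => exact ⟨fun _ => Classical.arbitrary α, by simp⟩
  | @insert a s ha ih =>
    obtain ⟨f, hf⟩ := ih
    obtain ⟨c, -, hc⟩ := exists_mem_notMem_of_card_lt_card (t := univ)
      (card_image_le.trans_lt (by simpa using h a) : #((G.neighborFinset a).image f) < #univ)
    have hfresh : ∀ b, G.Adj a b → f b ≠ c := fun b hab hbc =>
      hc (mem_image.mpr ⟨b, (G.mem_neighborFinset a b).mpr hab, hbc⟩)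
    refine ⟨Function.update f a c, ?_⟩
    intro u hu v hv huv
    rw [mem_insert] at hu hv
    simp only [Function.update_apply]
    split_ifs with hua hva hva
    · exact absurd (hua.trans hva.symm) huv.ne
    · subst hua; exact (hfresh v huv).symm
    · subst hva; exact hfresh u huv.symm
    · exact hf u (hu.resolve_left hua) v (hv.resolve_left hva) huv

end SimpleGraph

section Words

variable {α : Type*}

theorem List.Sublist.exists_sublist_eraseIdx {y b : List α} (h : y <+ b)
    (hlt : y.length < b.length) : ∃ i < b.length, y <+ b.eraseIdx i := by
  induction h with
  | slnil => simp at hlt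
  | cons a h _ => exact ⟨0, by simp, by simpa using h⟩
  | cons_cons a _ ih =>
    obtain ⟨i, hi, hsub⟩ := ih (by simpa using hlt)
    exact ⟨i + 1, by simpa using hi, by simpa using hsub⟩

theorem List.Vector.exists_eq_insertIdx_of_sublist {n : ℕ} {y : List α}
    {b : List.Vector α (n + 1)} (h : y <+ b.1) (hlt : y.length < n + 1) :
    ∃ (c : List.Vector α n) (i : Fin (n + 1)) (a : α), y <+ c.1 ∧ b = c.insertIdx a i := by
  obtain ⟨i, hi, hsub⟩ := h.exists_sublist_eraseIdx (by simpa using hlt)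
  have hin : i < n + 1 := by simpa using hi
  refine ⟨b.eraseIdx ⟨i, hin⟩, ⟨i, hin⟩, b.1[i], by simpa using hsub, Subtype.ext ?_⟩
  simp [List.Vector.insertIdx_val, List.insertIdx_eraseIdx_getElem]

def Confusable (k : ℕ) (x x' : List α) : Prop := ∃ y, y ∈ Subseq k x ∧ y ∈ Subseq k x'

theorem Confusable.symm {k : ℕ} {x x' : List α} (h : Confusable k x x') : Confusable k x' x :=
  let ⟨y, hx, hx'⟩ := h; ⟨y, hx', hx⟩

variable (α) in
def confusabilityGraph (k n : ℕ) : SimpleGraph (List.Vector α n) :=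
  SimpleGraph.fromRel fun x x' => Confusable k x.1 x'.1

theorem confusabilityGraph_adj {k n : ℕ} {x x' : List.Vector α n} :
    (confusabilityGraph α k n).Adj x x' ↔ x ≠ x' ∧ Confusable k x.1 x'.1 := by
  simp only [confusabilityGraph, SimpleGraph.fromRel_adj, and_congr_right_iff]
  exact fun _ => ⟨fun h => h.elim id Confusable.symm, Or.inl⟩

theorem exists_decoder_of_forall_adj_ne {β : Type*} {k n : ℕ} (H : List.Vector α n → β)
    (hH : ∀ x x', (confusabilityGraph α k n).Adj x x' → H x ≠ H x') :
    ∃ D : List α → β → List α, ∀ x : List.Vector α n, ∀ y ∈ Subseq k x.1, D y (H x) = x.1 := by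
  classical
  refine ⟨fun y h => if hx : ∃ x, y ∈ Subseq k x.1 ∧ H x = h then hx.choose.1 else [], ?_⟩
  intro x y hy
  have hex : ∃ x', y ∈ Subseq k x'.1 ∧ H x' = H x := ⟨x, hy, rfl⟩
  dsimp only
  rw [dif_pos hex]
  obtain ⟨hy', hH'⟩ := hex.choose_spec
  by_contra hne
  exact hH _ _ (confusabilityGraph_adj.mpr ⟨fun h => hne (congrArg Subtype.val h), y, hy', hy⟩) hH'

variable [Fintype α] [DecidableEq α]

def supersequences (n : ℕ) (y : List α) : Finset (List.Vector α n) := {b | y <+ b.1}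

theorem card_supersequences_le (y : List α) {j n : ℕ} (hn : y.length + j = n) :
    #(supersequences n y) ≤ (n * Fintype.card α) ^ j := by
  induction j generalizing n with
  | zero =>
    subst hn
    refine card_le_one.mpr fun b hb b' hb' => Subtype.ext ?_
    simp only [supersequences, mem_filter, mem_univ, true_and] at hb hb'
    rw [← hb.eq_of_length (by simp), ← hb'.eq_of_length (by simp)]
  | succ j ih =>
    subst hn
    set n' := y.length + j
    calc #(supersequences (n' + 1) y)
        ≤ #((supersequences n' y ×ˢ (univ : Finset (Fin (n' + 1) × α))).image
            fun p => p.1.insertIdx p.2.2 p.2.1) := by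
          refine card_le_card fun b hb => ?_
          simp only [supersequences, mem_filter, mem_univ, true_and] at hb
          obtain ⟨c, i, a, hc, rfl⟩ := List.Vector.exists_eq_insertIdx_of_sublist hb (by omega)
          exact mem_image.mpr ⟨(c, i, a), by simpa [supersequences] using hc, rfl⟩
      _ ≤ (n' * Fintype.card α) ^ j * ((n' + 1) * Fintype.card α) := by
          refine card_image_le.trans ?_
          rw [card_product, card_univ, Fintype.card_prod, Fintype.card_fin]
          gcongr
          exact ih rfl
      _ ≤ ((n' + 1) * Fintype.card α) ^ (j + 1) := by
          rw [pow_succ]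
          gcongr
          omega

theorem degree_confusabilityGraph_le {k n : ℕ} (hkn : k ≤ n)
    [DecidableRel (confusabilityGraph α k n).Adj] (x : List.Vector α n) :
    (confusabilityGraph α k n).degree x ≤ n.choose k * (n * Fintype.card α) ^ k := by
  have hsub : (confusabilityGraph α k n).neighborFinset x ⊆
      (x.1.sublistsLen (n - k)).toFinset.biUnion (supersequences n) := by
    intro x' hx'
    obtain ⟨-, y, ⟨hyx, hylen⟩, hyx', -⟩ :=
      confusabilityGraph_adj.mp ((SimpleGraph.mem_neighborFinset _ _ _).mp hx')
    refine mem_biUnion.mpr ⟨y, ?_, by simpa [supersequences] using hyx'⟩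
    rw [List.mem_toFinset, List.mem_sublistsLen]
    exact ⟨hyx, by have := x.2; omega⟩
  have hcard : #(x.1.sublistsLen (n - k)).toFinset ≤ n.choose k := by
    refine (List.toFinset_card_le _).trans ?_
    rw [List.length_sublistsLen, x.2, Nat.choose_symm hkn]
  rw [← SimpleGraph.card_neighborFinset_eq_degree]
  refine (card_le_card hsub).trans (card_biUnion_le_card_mul _ _ _ fun y hy => ?_)
    |>.trans (Nat.mul_le_mul_right _ hcard)
  rw [List.mem_toFinset, List.mem_sublistsLen] at hy
  exact card_supersequences_le y (by omega)

end Words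

theorem stmt_2_general (k n : ℕ) (hkn : k ≤ n) :
    ∃ m : ℕ, (m : ℝ) ≤ 2 * (k : ℝ) * Real.logb 2 n + 2 ∧
      ∃ (hash₁ : List Bool → List Bool) (D : List Bool → List Bool → List Bool),
        (∀ x : List Bool, x.length = n → (hash₁ x).length = m) ∧
        (∀ x : List Bool, x.length = n → ∀ y ∈ Subseq k x, D y (hash₁ x) = x) := by
  classical
  set m := Nat.log 2 (n ^ (2 * k)) + 2
  have hdeg (x : List.Vector Bool n) :
      (confusabilityGraph Bool k n).degree x < Fintype.card (Fin m → Bool) := by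
    have hlog := Nat.lt_pow_succ_log_self one_lt_two (n ^ (2 * k))
    calc (confusabilityGraph Bool k n).degree x ≤ n.choose k * (n * 2) ^ k :=
          degree_confusabilityGraph_le hkn x
      _ = n.choose k * 2 ^ k * n ^ k := by ring
      _ ≤ 2 * n ^ k * n ^ k := Nat.mul_le_mul_right _ (Nat.choose_mul_two_pow_le n k)
      _ = 2 * n ^ (2 * k) := by ring
      _ < 2 * 2 ^ (Nat.log 2 (n ^ (2 * k)) + 1) := by omega
      _ = 2 ^ m := (pow_succ' 2 _).symm
      _ = Fintype.card (Fin m → Bool) := by simp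
  obtain ⟨C⟩ := (confusabilityGraph Bool k n).exists_coloring_of_degree_lt hdeg
  obtain ⟨D, hD⟩ := exists_decoder_of_forall_adj_ne (fun x => List.ofFn (C x))
    fun x x' hadj heq => C.valid hadj (List.ofFn_injective heq)
  refine ⟨m, ?_, fun x => if hx : x.length = n then List.ofFn (C ⟨x, hx⟩) else [], D,
    fun x hx => by simp [hx, m], fun x hx y hy => by simpa [hx] using hD ⟨x, hx⟩ y hy⟩
  calc (m : ℝ) ≤ Real.logb 2 (n ^ (2 * k) : ℕ) + 2 := by
        simpa [m] using Real.natLog_le_logb (n ^ (2 * k)) 2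
    _ = 2 * k * Real.logb 2 n + 2 := by rw [Nat.cast_pow, Real.logb_pow]; push_cast; ring

theorem stmt_2 (k n : ℕ) (hk : 1 ≤ k) (hkn : k ≤ n) (hn : 2 ≤ n) :
    ∃ m : ℕ, (m : ℝ) ≤ 2 * (k : ℝ) * Real.logb 2 n + 2 ∧
      ∃ (hash₁ : List Bool → List Bool) (D : List Bool → List Bool → List Bool),
        (∀ x : List Bool, x.length = n → (hash₁ x).length = m) ∧
        (∀ x : List Bool, x.length = n → ∀ y ∈ Subseq k x, D y (hash₁ x) = x) :=
  stmt_2_general k n hkn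
end

section
/- Let m, k, n be positive integers with m ≤ n and k ≤ n, let s ∈ {0,1}^n, and let s' ∈ σ_k(s). Then the number of patterns p ∈ {0,1}^m such that s' is not p-preserving with respect to s is at most k(2m − 1). -/
/-- The string obtained from `s` by deleting the bits at the positions in `I`. -/
def deleteAt (s : List Bool) (I : Finset ℕ) : List Bool :=
  ((List.range s.length).filter (fun i => i ∉ I)).map (fun i => s.getD i false)

/-- The number of occurrences of `p` as a substring of `s`. -/
def occCount (p s : List Bool) : ℕ :=
  ((List.range s.length).filter (fun a => (s.drop a).take p.length = p)).length

/-- `s'` is `p`-preserving with respect to `s`: `s'` is obtained from `s` by deleting `k` bits,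
no occurrence of `p` in `s` contains a deleted bit, and `s` and `s'` have equally many
occurrences of `p`. -/
def Preserving (k : ℕ) (p s s' : List Bool) : Prop :=
  ∃ I : Finset ℕ, I.card = k ∧ (∀ i ∈ I, i < s.length) ∧ s' = deleteAt s I ∧
    (∀ a : ℕ, (s.drop a).take p.length = p →
      ∀ i ∈ I, ¬ (a ≤ i ∧ i < a + p.length)) ∧
    occCount p s = occCount p s'

namespace List

theorem Pairwise.rel_of_getElem?_eq_some {α : Type*} {R : α → α → Prop} {l : List α}
    (hl : l.Pairwise R) {i j : ℕ} {x y : α} (hx : l[i]? = some x) (hy : l[j]? = some y)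
    (hij : i < j) : R x y := by
  obtain ⟨hi, rfl⟩ := getElem?_eq_some_iff.1 hx
  obtain ⟨hj, rfl⟩ := getElem?_eq_some_iff.1 hy
  exact pairwise_iff_getElem.1 hl i j hi hj hij

theorem getElem?_succ_of_succ_mem {l : List ℕ} (hl : l.Pairwise (· < ·)) {i x : ℕ}
    (hx : l[i]? = some x) (hx1 : x + 1 ∈ l) : l[i + 1]? = some (x + 1) := by
  obtain ⟨u, hu⟩ := mem_iff_getElem?.1 hx1
  rcases lt_trichotomy u (i + 1) with h | rfl | h
  · rcases Nat.lt_succ_iff.1 h |>.lt_or_eq with h | rfl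
    · have := hl.rel_of_getElem?_eq_some hu hx h
      omega
    · simp [hx] at hu
  · exact hu
  · have hi1 : i + 1 < l.length := h.trans (getElem?_eq_some_iff.1 hu).1
    have h1 := hl.rel_of_getElem?_eq_some hx (getElem?_eq_getElem hi1) (lt_add_one i)
    have h2 := hl.rel_of_getElem?_eq_some (getElem?_eq_getElem hi1) hu h
    omega

theorem getElem?_add_of_forall_add_mem {l : List ℕ} (hl : l.Pairwise (· < ·)) {i x r : ℕ}
    (hx : l[i]? = some x) (hr : ∀ j ≤ r, x + j ∈ l) : l[i + r]? = some (x + r) := by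
  induction r with
  | zero => simpa using hx
  | succ r ih =>
    exact getElem?_succ_of_succ_mem hl (ih fun j hj => hr j (by omega)) (hr (r + 1) le_rfl)

theorem take_drop_eq_iff {α : Type*} {s p : List α} {a : ℕ} :
    (s.drop a).take p.length = p ↔ ∀ j < p.length, s[a + j]? = p[j]? := by
  constructor
  · intro h j hj
    rw [← getElem?_drop, ← h, getElem?_take, if_pos hj]
  · intro h
    ext1 j
    rw [getElem?_take, getElem?_drop]
    split_ifs with hj
    · exact h j hj
    · exact (getElem?_eq_none (not_lt.1 hj)).symm

end List

def keptPositions (n : ℕ) (I : Finset ℕ) : List ℕ := (List.range n).filter (· ∉ I)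

section keptPositions

variable {n : ℕ} {I : Finset ℕ}

theorem mem_keptPositions {x : ℕ} : x ∈ keptPositions n I ↔ x < n ∧ x ∉ I := by
  simp [keptPositions]

theorem pairwise_keptPositions : (keptPositions n I).Pairwise (· < ·) :=
  List.pairwise_lt_range.sublist List.filter_sublist

theorem getElem?_keptPositions_add {t x r : ℕ} (hx : (keptPositions n I)[t]? = some x)
    (hr : t + r < (keptPositions n I).length)
    (hgap : ∀ j < r, ∀ y, (keptPositions n I)[t + j]? = some y → y + 1 ∉ I) :
    (keptPositions n I)[t + r]? = some (x + r) := by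
  induction r with
  | zero => simpa using hx
  | succ r ih =>
    have hxr := ih (by omega) fun j hj => hgap j (by omega)
    have hnext := List.getElem?_eq_getElem hr
    have hlt := pairwise_keptPositions.rel_of_getElem?_eq_some hxr hnext (by omega)
    have hn := (mem_keptPositions.1 (List.mem_of_getElem? hnext)).1
    have hsucc : x + r + 1 ∈ keptPositions n I :=
      mem_keptPositions.2 ⟨by omega, hgap r (by omega) _ hxr⟩
    exact List.getElem?_succ_of_succ_mem pairwise_keptPositions hxr hsucc

end keptPositions

section deleteAt

variable {I : Finset ℕ}

theorem deleteAt_eq_map (s : List Bool) (I : Finset ℕ) :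
    deleteAt s I = (keptPositions s.length I).map (s.getD · false) :=
  rfl

theorem length_deleteAt (s : List Bool) (I : Finset ℕ) :
    (deleteAt s I).length = (keptPositions s.length I).length := by
  rw [deleteAt_eq_map, List.length_map]

theorem getElem?_deleteAt {s : List Bool} {t x : ℕ}
    (h : (keptPositions s.length I)[t]? = some x) : (deleteAt s I)[t]? = s[x]? := by
  have hx := (mem_keptPositions.1 (List.mem_of_getElem? h)).1
  simp [deleteAt_eq_map, h, List.getElem?_eq_getElem hx]

variable {s p : List Bool}

theorem take_drop_deleteAt_of_take_drop {a i : ℕ}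
    (hi : (keptPositions s.length I)[i]? = some a) (hfree : ∀ j < p.length, a + j ∉ I)
    (ha : (s.drop a).take p.length = p) : ((deleteAt s I).drop i).take p.length = p := by
  rw [List.take_drop_eq_iff] at ha ⊢
  intro j hj
  have hkept : ∀ j' ≤ j, a + j' ∈ keptPositions s.length I := by
    intro j' hj'
    have hs : s[a + j']? = some p[j'] := (ha j' (by omega)).trans (List.getElem?_eq_getElem _)
    exact mem_keptPositions.2 ⟨(List.getElem?_eq_some_iff.1 hs).1, hfree j' (by omega)⟩
  rw [getElem?_deleteAt (List.getElem?_add_of_forall_add_mem pairwise_keptPositions hi hkept),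
    ha j hj]

theorem take_drop_of_take_drop_deleteAt {t x : ℕ}
    (hx : (keptPositions s.length I)[t]? = some x)
    (hgap : ∀ j < p.length - 1, ∀ y, (keptPositions s.length I)[t + j]? = some y → y + 1 ∉ I)
    (ht : ((deleteAt s I).drop t).take p.length = p) : (s.drop x).take p.length = p := by
  rw [List.take_drop_eq_iff] at ht ⊢
  intro j hj
  have hs' : (deleteAt s I)[t + j]? = some p[j] := (ht j hj).trans (List.getElem?_eq_getElem _)
  have hlen : t + j < (keptPositions s.length I).length :=
    length_deleteAt s I ▸ (List.getElem?_eq_some_iff.1 hs').1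
  rw [← getElem?_deleteAt (getElem?_keptPositions_add hx hlen fun j' hj' => hgap j' (by omega)),
    ht j hj]

theorem occCount_eq_card (p s : List Bool) :
    occCount p s = ((Finset.range s.length).filter fun a => (s.drop a).take p.length = p).card :=
  rfl

theorem occCount_deleteAt (hp : p ≠ [])
    (hfree : ∀ a, (s.drop a).take p.length = p → ∀ i ∈ I, ¬ (a ≤ i ∧ i < a + p.length))
    (hgap : ∀ t, ((deleteAt s I).drop t).take p.length = p →
      ∀ j < p.length - 1, ∀ y, (keptPositions s.length I)[t + j]? = some y → y + 1 ∉ I) :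
    occCount p s = occCount p (deleteAt s I) := by
  set K := keptPositions s.length I
  have hK : K.Nodup := pairwise_keptPositions.nodup
  have hlen : (deleteAt s I).length = K.length := length_deleteAt s I
  have hp0 : 0 < p.length := List.length_pos_iff.2 hp
  have hkept : ∀ a < s.length, (s.drop a).take p.length = p → a ∈ K := fun a ha hocc =>
    mem_keptPositions.2 ⟨ha, fun h => hfree a hocc a h ⟨le_rfl, by omega⟩⟩
  rw [occCount_eq_card, occCount_eq_card]
  refine (Finset.card_nbij' (K.getD · 0) K.idxOf ?_ ?_ ?_ ?_).symm
  · intro t ht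
    simp only [Finset.coe_filter, Finset.mem_range, Set.mem_ofPred_eq] at ht ⊢
    have hx : K[t]? = some (K.getD t 0) := by
      rw [List.getD_eq_getElem _ _ (hlen ▸ ht.1), List.getElem?_eq_getElem]
    exact ⟨(mem_keptPositions.1 (List.mem_of_getElem? hx)).1,
      take_drop_of_take_drop_deleteAt hx (hgap t ht.2) ht.2⟩
  · intro a ha
    simp only [Finset.coe_filter, Finset.mem_range, Set.mem_ofPred_eq] at ha ⊢
    have haK := hkept a ha.1 ha.2
    exact ⟨hlen ▸ List.idxOf_lt_length_of_mem haK, take_drop_deleteAt_of_take_drop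
      (List.getElem?_idxOf haK) (fun j _ h => hfree a ha.2 _ h ⟨by omega, by omega⟩) ha.2⟩
  · intro t ht
    simp only [Finset.coe_filter, Finset.mem_range, Set.mem_ofPred_eq] at ht
    simp only [List.getD_eq_getElem _ _ (hlen ▸ ht.1), hK.idxOf_getElem]
  · intro a ha
    simp only [Finset.coe_filter, Finset.mem_range, Set.mem_ofPred_eq] at ha
    simp [List.getD_eq_getElem?_getD, List.getElem?_idxOf (hkept a ha.1 ha.2)]

end deleteAt

def windowsThrough {α : Type*} [DecidableEq α] (s : List α) (I : Finset ℕ) (m : ℕ) :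
    Finset (List α) :=
  (I ×ˢ Finset.range m).image fun q => (s.drop (q.1 - q.2)).take m

-- The window is indexed by the deleted position `i` that immediately follows its `j`-th symbol.
def windowsAcrossDeletion (s : List Bool) (I : Finset ℕ) (m : ℕ) : Finset (List Bool) :=
  (I ×ˢ Finset.range (m - 1)).image fun q =>
    ((deleteAt s I).drop ((keptPositions s.length I).idxOf (q.1 - 1) - q.2)).take m

section windows

variable {I : Finset ℕ} {m : ℕ}

theorem card_windowsThrough_le {α : Type*} [DecidableEq α] (s : List α) :
    (windowsThrough s I m).card ≤ I.card * m :=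
  Finset.card_image_le.trans (by simp)

theorem card_windowsAcrossDeletion_le (s : List Bool) :
    (windowsAcrossDeletion s I m).card ≤ I.card * (m - 1) :=
  Finset.card_image_le.trans (by simp)

theorem take_drop_mem_windowsThrough {α : Type*} [DecidableEq α] (s : List α) {a i : ℕ}
    (hi : i ∈ I) (hai : a ≤ i) (him : i < a + m) :
    (s.drop a).take m ∈ windowsThrough s I m :=
  Finset.mem_image.2 ⟨(i, i - a), by simp [hi]; omega, by simp [Nat.sub_sub_self hai]⟩

theorem take_drop_mem_windowsAcrossDeletion (s : List Bool) {t j y : ℕ} (hj : j < m - 1)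
    (hy : (keptPositions s.length I)[t + j]? = some y) (hyI : y + 1 ∈ I) :
    ((deleteAt s I).drop t).take m ∈ windowsAcrossDeletion s I m := by
  obtain ⟨_, rfl⟩ := List.getElem?_eq_some_iff.1 hy
  refine Finset.mem_image.2 ⟨(_, j), Finset.mem_product.2 ⟨hyI, by simpa using hj⟩, ?_⟩
  simp [pairwise_keptPositions.nodup.idxOf_getElem]

end windows

theorem preserving_deleteAt {I : Finset ℕ} {s p : List Bool} (hp : p ≠ [])
    (hIs : ∀ i ∈ I, i < s.length) (hp₁ : p ∉ windowsThrough s I p.length)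
    (hp₂ : p ∉ windowsAcrossDeletion s I p.length) :
    Preserving I.card p s (deleteAt s I) := by
  have hfree : ∀ a, (s.drop a).take p.length = p → ∀ i ∈ I, ¬ (a ≤ i ∧ i < a + p.length) :=
    fun a ha i hi h => hp₁ <| by simpa only [ha] using take_drop_mem_windowsThrough s hi h.1 h.2
  have hgap : ∀ t, ((deleteAt s I).drop t).take p.length = p →
      ∀ j < p.length - 1, ∀ y, (keptPositions s.length I)[t + j]? = some y → y + 1 ∉ I :=
    fun t ht j hj y hy hyI => hp₂ <| by
      simpa only [ht] using take_drop_mem_windowsAcrossDeletion s hj hy hyI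
  exact ⟨I, rfl, hIs, rfl, hfree, occCount_deleteAt hp hfree hgap⟩

theorem exists_deleteAt_eq_of_sublist {s' s : List Bool} (h : s'.Sublist s) :
    ∃ I : Finset ℕ, I.card + s'.length = s.length ∧ (∀ i ∈ I, i < s.length) ∧
      deleteAt s I = s' := by
  obtain ⟨f, hf⟩ := List.sublist_iff_exists_orderEmbedding_getElem?_eq.1 h
  have hfs : ∀ t < s'.length, f t < s.length := fun t ht =>
    (List.getElem?_eq_some_iff.1 ((hf t).symm.trans (List.getElem?_eq_getElem ht))).1
  set J := (Finset.range s'.length).image f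
  have hJ : J ⊆ Finset.range s.length := by
    simpa [J, Finset.image_subset_iff] using hfs
  have hJcard : J.card = s'.length := by
    simp [J, Finset.card_image_of_injective _ f.injective]
  refine ⟨Finset.range s.length \ J, ?_, fun i hi => by simpa using (Finset.mem_sdiff.1 hi).1, ?_⟩
  · have := Finset.card_le_card hJ
    rw [Finset.card_sdiff_of_subset hJ, Finset.card_range] at *
    omega
  · have hkept : keptPositions s.length (Finset.range s.length \ J) =
        (List.range s'.length).map f := by
      refine pairwise_keptPositions.eq_of_mem_iff ?_ fun x => ?_
      · exact List.pairwise_map.2 (List.pairwise_lt_range.imp fun h => f.strictMono h)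
      · rw [mem_keptPositions, ← Finset.mem_range, ← Finset.mem_sdiff,
          Finset.sdiff_sdiff_eq_self hJ]
        simp [J]
    rw [deleteAt_eq_map, hkept]
    refine List.ext_getElem? fun t => ?_
    rcases lt_or_ge t s'.length with ht | ht
    · simp [List.getElem?_range ht, hf t, List.getElem?_eq_getElem (hfs t ht)]
    · simp [ht]

theorem stmt_11_general (m k : ℕ) (hm : 1 ≤ m)
    (s s' : List Bool) (hs' : s' ∈ Subseq k s) :
    {p : List Bool | p.length = m ∧ ¬ Preserving k p s s'}.ncard ≤ k * (2 * m - 1) := by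
  obtain ⟨hsub, hlen⟩ := hs'
  obtain ⟨I, hcard, hIs, rfl⟩ := exists_deleteAt_eq_of_sublist hsub
  obtain rfl : I.card = k := by omega
  have hbad : {p : List Bool | p.length = m ∧ ¬ Preserving I.card p s (deleteAt s I)} ⊆
      ↑(windowsThrough s I m ∪ windowsAcrossDeletion s I m) := by
    rintro p ⟨rfl, hnp⟩
    by_contra hp
    simp only [Finset.coe_union, Set.mem_union, Finset.mem_coe, not_or] at hp
    exact hnp (preserving_deleteAt (List.ne_nil_of_length_pos hm) hIs hp.1 hp.2)
  calc _ ≤ (windowsThrough s I m ∪ windowsAcrossDeletion s I m).card :=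
        (Set.ncard_le_ncard hbad (Finset.finite_toSet _)).trans_eq (Set.ncard_coe_finset _)
    _ ≤ I.card * m + I.card * (m - 1) := (Finset.card_union_le _ _).trans
        (add_le_add (card_windowsThrough_le s) (card_windowsAcrossDeletion_le s))
    _ = I.card * (2 * m - 1) := by rw [← mul_add]; congr 1; omega

theorem stmt_11 (m k n : ℕ) (hm : 1 ≤ m) (hmn : m ≤ n) (hk : 1 ≤ k) (hkn : k ≤ n)
    (s s' : List Bool) (hs : s.length = n) (hs' : s' ∈ Subseq k s) :
    {p : List Bool | p.length = m ∧ ¬ Preserving k p s s'}.ncard ≤ k * (2 * m - 1) :=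
  stmt_11_general m k hm s s' hs'
end

section
/- Fix an integer k ≥ 2. For all sufficiently large n, setting m = ⌈log₂ k + log₂ log₂ (k+1) + 5⌉ and L = ⌈m·2^m·(log₂(n·2^m) + 1)⌉, for every string s ∈ {0,1}^n there exists a template t ∈ {0,1}^L such that μ(s, t) is k-mixed. -/
/-- The pattern length `m = ⌈log₂ k + log₂ log₂ (k+1) + 5⌉`. -/
noncomputable def mPat (k : ℕ) : ℕ :=
  ⌈Real.logb 2 k + Real.logb 2 (Real.logb 2 (k + 1)) + 5⌉₊

/-- The window length `d = ⌊20000 k (log₂ k)² log₂ n⌋`. -/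
noncomputable def dWin (k n : ℕ) : ℕ :=
  ⌊20000 * (k : ℝ) * (Real.logb 2 k) ^ 2 * Real.logb 2 n⌋₊

/-- `s ∈ {0,1}^n` is `k`-mixed: every pattern `p` of length `m` has an occurrence
(`p`-split point) starting inside every length-`d` window of `s`. -/
def Mixed (k n : ℕ) (s : List Bool) : Prop :=
  ∀ p : List Bool, p.length = mPat k →
    ∀ j : ℕ, j + dWin k n ≤ s.length →
      ∃ i : ℕ, j ≤ i ∧ i < j + dWin k n ∧ (s.drop i).take (mPat k) = p

/-- The template length `L = ⌈m 2^m (log₂(n 2^m) + 1)⌉`. -/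
noncomputable def Lval (k n : ℕ) : ℕ :=
  ⌈(mPat k : ℝ) * 2 ^ mPat k * (Real.logb 2 ((n : ℝ) * 2 ^ mPat k) + 1)⌉₊

/-- `mu s t` is the bitwise XOR of `s` with the concatenation of `⌈|s|/|t|⌉` copies of the
template `t`, truncated to the length of `s`. -/
def mu (s t : List Bool) : List Bool :=
  (s.zip (((List.replicate ((s.length + t.length - 1) / t.length) t).flatten).take s.length)).map
    (fun a => xor a.1 a.2)

open Finset in
lemma exists_good {ι : Type*} [DecidableEq ι] (A : Finset ι) {C m : ℕ}
    (W : ι → Fin C → (Fin m → Bool))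
    (h : A.card * (2 ^ m - 1) ^ C < (2 ^ m) ^ C) :
    ∃ g : Fin C → Fin m → Bool, ∀ a ∈ A, ∃ c, g c = W a c := by
  classical
  set Bad : Finset (Fin C → Fin m → Bool) :=
    A.biUnion (fun a => Fintype.piFinset fun c => {W a c}ᶜ) with hBad
  have hcard : Bad.card < Fintype.card (Fin C → Fin m → Bool) := by
    have h1 : Bad.card ≤ A.card * (2 ^ m - 1) ^ C := by
      refine le_trans (Finset.card_biUnion_le) ?_
      refine le_trans (Finset.sum_le_card_nsmul A _ ((2 ^ m - 1) ^ C) ?_) (by simp [mul_comm])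
      intro a _
      rw [Fintype.card_piFinset]
      apply le_of_eq
      rw [Finset.prod_congr rfl (fun c _ => ?_), Finset.prod_const, Finset.card_univ, Fintype.card_fin]
      rw [Finset.card_compl, Finset.card_singleton]
      simp [Fintype.card_fun]
    calc Bad.card ≤ A.card * (2 ^ m - 1) ^ C := h1
      _ < (2 ^ m) ^ C := h
      _ = Fintype.card (Fin C → Fin m → Bool) := by simp [Fintype.card_fun]
  have hne : Badᶜ.Nonempty := Finset.card_pos.mp (by rw [Finset.card_compl]; omega)
  obtain ⟨g, hg⟩ := hne
  rw [Finset.mem_compl, hBad, Finset.mem_biUnion] at hg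
  push_neg at hg
  refine ⟨g, fun a ha => ?_⟩
  have := hg a ha
  rw [Fintype.mem_piFinset] at this
  push_neg at this
  obtain ⟨c, hc⟩ := this
  exact ⟨c, by simpa using hc⟩


lemma getElem_flatten_replicate (t : List Bool) (hL : 0 < t.length) :
    ∀ (c i : ℕ) (h : i < c * t.length),
      (List.replicate c t).flatten[i]'(by
        simpa [List.length_flatten, List.map_replicate, List.sum_replicate, smul_eq_mul,
          mul_comm] using h) = t[i % t.length]'(Nat.mod_lt _ hL) := by
  intro c
  induction c with
  | zero => intro i h; omega
  | succ c ih =>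
    intro i h
    simp only [List.replicate_succ, List.flatten_cons]
    rcases lt_or_ge i t.length with h1 | h1
    · rw [List.getElem_append_left h1]
      congr 1
      exact (Nat.mod_eq_of_lt h1).symm
    · rw [List.getElem_append_right h1]
      have h2 : i - t.length < c * t.length := by
        have h3 : (c + 1) * t.length = c * t.length + t.length := by ring
        omega
      rw [ih (i - t.length) h2]
      congr 1
      exact (Nat.mod_eq_sub_mod h1).symm

lemma ceil_div_ge (j L : ℕ) (hL : 0 < L) : j ≤ ((j + L - 1) / L) * L := by
  have h1 := Nat.mod_add_div' (j + L - 1) L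
  have h2 : (j + L - 1) % L < L := Nat.mod_lt _ hL
  omega

lemma ceil_div_lt (j L : ℕ) (hL : 0 < L) : ((j + L - 1) / L) * L < j + L := by
  have := Nat.div_mul_le_self (j + L - 1) L
  omega

lemma flatten_replicate_length (s t : List Bool) :
    ((List.replicate ((s.length + t.length - 1) / t.length) t).flatten).length
      = ((s.length + t.length - 1) / t.length) * t.length := by
  simp [List.length_flatten, List.map_replicate, List.sum_replicate, smul_eq_mul, mul_comm]

lemma mu_length (s t : List Bool) (hL : 0 < t.length) : (mu s t).length = s.length := by
  have h1 := ceil_div_ge s.length t.length hL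
  simp [mu, flatten_replicate_length, List.length_take]
  omega

lemma mu_getElem (s t : List Bool) (hL : 0 < t.length) (i : ℕ) (h : i < s.length) :
    (mu s t)[i]'(by rw [mu_length s t hL]; exact h)
      = xor (s[i]'h) (t[i % t.length]'(Nat.mod_lt _ hL)) := by
  have h1 := ceil_div_ge s.length t.length hL
  have h2 : i < ((s.length + t.length - 1) / t.length) * t.length := by omega
  simp only [mu, List.getElem_map, List.getElem_zip, List.getElem_take]
  rw [getElem_flatten_replicate t hL _ i h2]

lemma logb_le_two_mul_sub_one {y : ℝ} (hy : 1 ≤ y) : Real.logb 2 y ≤ 2 * (y - 1) := by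
  have h1 : Real.log y ≤ y - 1 := Real.log_le_sub_one_of_pos (by linarith)
  have h2 : (0.6931471803 : ℝ) < Real.log 2 := Real.log_two_gt_d9
  rw [Real.logb, div_le_iff₀ (by linarith)]
  nlinarith [Real.log_nonneg hy]

lemma log_le_logb {x : ℝ} (hx : 1 ≤ x) : Real.log x ≤ Real.logb 2 x := by
  have h1 : Real.log 2 ≤ 1 := by
    have := Real.log_le_sub_one_of_pos (by norm_num : (0:ℝ) < 2); linarith
  have h2 : (0.6931471803 : ℝ) < Real.log 2 := Real.log_two_gt_d9
  rw [Real.logb, le_div_iff₀ (by linarith)]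
  nlinarith [Real.log_nonneg hx]

lemma counting_ineq (m L n : ℕ) (hm : 1 ≤ m) (hn : 1 ≤ n)
    (hL : (m : ℝ) * 2 ^ m * (Real.logb 2 ((n : ℝ) * 2 ^ m) + 1) ≤ (L : ℝ)) :
    1 ≤ L / m ∧ n * 2 ^ m * (2 ^ m - 1) ^ (L / m) < (2 ^ m) ^ (L / m) := by
  set C := L / m with hC
  set M : ℝ := (2 : ℝ) ^ m with hM
  have hM2 : (2 : ℝ) ≤ M := by
    calc (2:ℝ) = 2 ^ 1 := (pow_one 2).symm
    _ ≤ 2 ^ m := by apply pow_le_pow_right₀ (by norm_num) hm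
  have hMpos : (0 : ℝ) < M := by linarith
  have hnM1 : (1 : ℝ) ≤ (n : ℝ) * M := by
    have : (1:ℝ) ≤ (n:ℝ) := by exact_mod_cast hn
    nlinarith
  set x := Real.logb 2 ((n : ℝ) * M) with hx
  have hx0 : 0 ≤ x := Real.logb_nonneg (by norm_num) hnM1
  have hmR : (1 : ℝ) ≤ (m : ℝ) := by exact_mod_cast hm
  -- C bound
  have hCreal : M * x + 1 < (C : ℝ) := by
    have h1 : (C : ℝ) * m + m > (L : ℝ) := by
      have e1 := Nat.mod_add_div' L m
      have e2 : L % m < m := Nat.mod_lt _ (by omega)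
      have : (L:ℝ) = (L % m : ℕ) + (C:ℝ) * m := by exact_mod_cast e1.symm
      have : ((L % m : ℕ) : ℝ) < (m:ℝ) := by exact_mod_cast e2
      linarith [show (L:ℝ) = ((L % m : ℕ):ℝ) + (C:ℝ) * m by exact_mod_cast e1.symm]
    have h4 : M * (x + 1) - 1 < C := by
      have h3 : (M * (x + 1) - 1) * m < (C:ℝ) * m := by nlinarith
      exact lt_of_mul_lt_mul_right h3 (by linarith)
    nlinarith
  have hC1 : 1 ≤ C := by
    have : (0:ℝ) < (C:ℝ) := by nlinarith
    exact_mod_cast Nat.one_le_cast.mp (by exact_mod_cast Nat.succ_le_of_lt (by exact_mod_cast this))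
  refine ⟨hC1, ?_⟩
  -- main inequality in ℝ
  have hln : Real.log ((n : ℝ) * M) ≤ x := log_le_logb hnM1
  have hkey : Real.log ((n : ℝ) * M) < (C : ℝ) / M := by
    rw [lt_div_iff₀ hMpos]
    nlinarith
  have h0 : (0:ℝ) < (n:ℝ) * M := by linarith
  have hexp : Real.exp (-((C : ℝ) / M)) < 1 / ((n : ℝ) * M) := by
    rw [lt_div_iff₀ h0]
    calc Real.exp (-((C:ℝ)/M)) * ((n:ℝ)*M)
        = Real.exp (-((C:ℝ)/M)) * Real.exp (Real.log ((n:ℝ)*M)) := by rw [Real.exp_log h0]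
      _ = Real.exp (Real.log ((n:ℝ)*M) - (C:ℝ)/M) := by rw [← Real.exp_add]; ring_nf
      _ < Real.exp 0 := Real.exp_lt_exp.mpr (by linarith)
      _ = 1 := Real.exp_zero
  have hfrac : (0:ℝ) ≤ 1 - 1/M := by
    rw [sub_nonneg, div_le_one hMpos]; linarith
  have hpow1 : ((M-1)/M)^C ≤ Real.exp (-((C:ℝ)/M)) := by
    have e1 : (M-1)/M = 1 - 1/M := by field_simp
    have e2 : (1 - 1/M) ≤ Real.exp (-(1/M)) := by
      have := Real.add_one_le_exp (-(1/M)); linarith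
    calc ((M-1)/M)^C ≤ (Real.exp (-(1/M)))^C := by
          rw [e1]; exact pow_le_pow_left₀ hfrac e2 C
      _ = Real.exp ((C:ℝ) * (-(1/M))) := (Real.exp_nat_mul _ C).symm
      _ = Real.exp (-((C:ℝ)/M)) := by ring_nf
  have hMC : (0:ℝ) < M^C := pow_pos hMpos C
  have hreal : (n:ℝ) * M * (M-1)^C < M^C := by
    have e3 : (M-1)^C = ((M-1)/M)^C * M^C := by
      rw [div_pow]; field_simp
    calc (n:ℝ)*M*(M-1)^C = (n:ℝ)*M*(((M-1)/M)^C * M^C) := by rw [← e3]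
      _ ≤ (n:ℝ)*M*(Real.exp (-((C:ℝ)/M)) * M^C) := by
          apply mul_le_mul_of_nonneg_left (mul_le_mul_of_nonneg_right hpow1 (le_of_lt hMC)) (by positivity)
      _ < (n:ℝ)*M*((1/((n:ℝ)*M)) * M^C) := by
          apply mul_lt_mul_of_pos_left (mul_lt_mul_of_pos_right hexp hMC) h0
      _ = M^C := by field_simp
  have hcast : ((2^m - 1 : ℕ) : ℝ) = M - 1 := by
    have h1 : (1:ℕ) ≤ 2^m := Nat.one_le_two_pow
    push_cast [h1]; ring
  rw [← hcast] at hreal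
  have h2 : ((2:ℝ))^m = ((2^m : ℕ) : ℝ) := by push_cast; ring
  rw [hM, h2] at hreal
  exact_mod_cast hreal


lemma mPat_bounds (k : ℕ) (hk : 2 ≤ k) :
    1 ≤ Real.logb 2 k ∧ 1 ≤ mPat k ∧ (mPat k : ℝ) ≤ 9 * Real.logb 2 k ∧
    (2:ℝ) ^ (mPat k) ≤ 128 * k * Real.logb 2 k := by
  have hk2 : (2:ℝ) ≤ (k:ℝ) := by exact_mod_cast hk
  have hb : (1:ℝ) < 2 := one_lt_two
  have hone : Real.logb 2 2 = 1 := Real.logb_self_eq_one hb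
  have hlk : 1 ≤ Real.logb 2 k := by
    rw [← hone]
    exact Real.logb_le_logb_of_le hb (by norm_num) (by linarith)
  set lk := Real.logb 2 k with hlkdef
  have hlk1a : 1 ≤ Real.logb 2 ((k:ℝ)+1) := by
    have h := Real.logb_le_logb_of_le hb (by linarith : (0:ℝ) < (k:ℝ)) (by linarith : (k:ℝ) ≤ (k:ℝ)+1)
    rw [← hlkdef] at h
    linarith
  have hlk1b : Real.logb 2 ((k:ℝ)+1) ≤ 2 * lk := by
    rw [show (2:ℝ) * lk = Real.logb 2 ((k:ℝ)^2) by rw [Real.logb_pow]; push_cast; ring]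
    exact Real.logb_le_logb_of_le hb (by linarith) (by nlinarith)
  set lk1 := Real.logb 2 ((k:ℝ)+1) with hlk1def
  have hLL : Real.logb 2 lk1 ≤ 4 * lk - 2 := by
    have := logb_le_two_mul_sub_one hlk1a
    linarith
  have hLL0 : 0 ≤ Real.logb 2 lk1 := Real.logb_nonneg (by norm_num) hlk1a
  have harg0 : (0:ℝ) ≤ lk + Real.logb 2 lk1 + 5 := by linarith
  have hmdef : mPat k = ⌈lk + Real.logb 2 lk1 + 5⌉₊ := by rw [mPat]
  have hmup : (mPat k : ℝ) ≤ lk + Real.logb 2 lk1 + 6 := by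
    rw [hmdef]
    have := Nat.ceil_lt_add_one harg0
    linarith
  have hm1 : 1 ≤ mPat k := by
    rw [hmdef]
    exact Nat.one_le_ceil_iff.mpr (by linarith)
  refine ⟨hlk, hm1, by linarith, ?_⟩
  have h2m : ((2:ℝ) ^ (mPat k) : ℝ) = (2:ℝ) ^ ((mPat k : ℝ)) := (Real.rpow_natCast 2 (mPat k)).symm
  rw [h2m]
  have hmono : (2:ℝ) ^ ((mPat k : ℝ)) ≤ (2:ℝ) ^ (lk + Real.logb 2 lk1 + 6) :=
    Real.rpow_le_rpow_of_exponent_le (by norm_num) hmup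
  have h64 : ((2:ℝ) ^ (6:ℝ)) = 64 := by
    rw [show (6:ℝ) = ((6:ℕ):ℝ) by norm_num, Real.rpow_natCast]; norm_num
  have hsplit : (2:ℝ) ^ (lk + Real.logb 2 lk1 + 6) = (k:ℝ) * lk1 * 64 := by
    rw [Real.rpow_add two_pos, Real.rpow_add two_pos, h64, hlkdef, hlk1def,
      Real.rpow_logb two_pos (by norm_num) (by linarith : (0:ℝ) < (k:ℝ)),
      Real.rpow_logb two_pos (by norm_num) (by rw [← hlk1def]; linarith)]
  calc (2:ℝ) ^ ((mPat k : ℝ)) ≤ (k:ℝ) * lk1 * 64 := by rw [← hsplit]; exact hmono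
    _ ≤ 128 * k * lk := by nlinarith

theorem stmt_13 (k : ℕ) (hk : 2 ≤ k) :
    ∃ n₀ : ℕ, ∀ n : ℕ, n₀ ≤ n → ∀ s : List Bool, s.length = n →
      ∃ t : List Bool, t.length = Lval k n ∧ Mixed k n (mu s t) := by
  classical
  obtain ⟨hlk, hm1, hm9, h2mk⟩ := mPat_bounds k hk
  set lk := Real.logb 2 k with hlkdef
  set m := mPat k with hmdef
  have hb : (1:ℝ) < 2 := one_lt_two
  have hk2 : (2:ℝ) ≤ (k:ℝ) := by exact_mod_cast hk
  have h2m0 : (0:ℝ) < 2 ^ m := by positivity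
  have h2m2 : (2:ℝ) ≤ 2 ^ m := by
    calc (2:ℝ) = 2^1 := (pow_one 2).symm
      _ ≤ 2^m := pow_le_pow_right₀ (by norm_num) hm1
  have hmR : (1:ℝ) ≤ (m:ℝ) := by exact_mod_cast hm1
  set Bc : ℝ := (m:ℝ) * 2 ^ m with hBcdef
  have hBpos : 0 < Bc := by positivity
  have hBub : Bc ≤ 1152 * k * lk ^ 2 := by
    calc Bc ≤ (9 * lk) * (128 * k * lk) := by
          apply mul_le_mul hm9 h2mk (le_of_lt h2m0) (by positivity)
      _ = 1152 * k * lk ^ 2 := by ring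
  set A : ℝ := 20000 * (k:ℝ) * lk ^ 2 with hAdef
  have hAB : 2 ≤ A - 2 * Bc := by nlinarith
  have hABpos : (0:ℝ) < A - 2 * Bc := by linarith
  set creal : ℝ := (2 * Bc * ((m:ℝ) + 1) + 3) / (A - 2 * Bc) with hcrdef
  have hcr0 : 0 ≤ creal := by
    apply div_nonneg _ (le_of_lt hABpos)
    nlinarith
  refine ⟨⌈(2:ℝ) ^ creal⌉₊ + 2, ?_⟩
  intro n hn0 s hs
  have hn2 : 2 ≤ n := by omega
  have hn1 : 1 ≤ n := by omega
  have hnR1 : (1:ℝ) ≤ (n:ℝ) := by exact_mod_cast hn1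
  set x := Real.logb 2 n with hxdef
  have hx0 : 0 ≤ x := Real.logb_nonneg hb hnR1
  have hxcr : creal ≤ x := by
    have h1 : (2:ℝ) ^ creal ≤ (n:ℝ) := by
      have := Nat.le_ceil ((2:ℝ) ^ creal)
      have h2 : (⌈(2:ℝ)^creal⌉₊ : ℝ) ≤ (n:ℝ) := by exact_mod_cast le_trans (Nat.le_add_right _ 2) hn0
      linarith
    have h3 := Real.logb_le_logb_of_le hb (Real.rpow_pos_of_pos two_pos creal) h1
    rwa [Real.logb_rpow two_pos (by norm_num)] at h3
  set L := Lval k n with hLdef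
  set d := dWin k n with hddef
  -- log of n * 2^m
  have hlognm : Real.logb 2 ((n:ℝ) * 2 ^ m) = x + m := by
    rw [Real.logb_mul (by positivity) (by positivity), hxdef]
    congr 1
    rw [Real.logb_pow, Real.logb_self_eq_one hb, mul_one]
  -- L bounds
  have hLlow : (m:ℝ) * 2 ^ m * (Real.logb 2 ((n:ℝ) * 2 ^ m) + 1) ≤ (L:ℝ) := Nat.le_ceil _
  have hLup : (L:ℝ) ≤ Bc * (x + (m:ℝ) + 1) + 1 := by
    rw [hLdef, Lval, ← hmdef]
    have harg : (0:ℝ) ≤ (m:ℝ) * 2 ^ m * (Real.logb 2 ((n:ℝ) * 2 ^ m) + 1) := by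
      rw [hlognm]; positivity
    have := Nat.ceil_lt_add_one harg
    rw [hlognm] at this ⊢
    rw [hBcdef]
    linarith
  -- d lower bound
  have hdlow : A * x - 1 < (d:ℝ) := by
    rw [hddef, dWin, ← hxdef, ← hlkdef, ← hAdef]
    exact Nat.sub_one_lt_floor _
  -- 2L ≤ d
  have hd2L : 2 * L ≤ d := by
    have hchain : (2:ℝ) * L ≤ A * x - 1 := by
      have h1 : (A - 2*Bc) * creal = 2 * Bc * ((m:ℝ) + 1) + 3 := by
        rw [hcrdef]; field_simp
      have h2 : (A - 2*Bc) * creal ≤ (A - 2*Bc) * x :=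
        mul_le_mul_of_nonneg_left hxcr (le_of_lt hABpos)
      nlinarith
    have : ((2 * L : ℕ) : ℝ) < (d : ℝ) := by push_cast; linarith
    exact_mod_cast le_of_lt (by exact_mod_cast this : (2*L : ℕ) < d)
  -- counting
  obtain ⟨hC1, hcount⟩ := counting_ineq m L n hm1 hn1 hLlow
  set C := L / m with hCdef
  have hm0 : 0 < m := hm1
  have hL1 : 1 ≤ L := by
    have h1 := Nat.div_mul_le_self L m
    rw [← hCdef] at h1
    have h2 : 1 * 1 ≤ C * m := Nat.mul_le_mul hC1 hm1
    omega
  have hL0 : 0 < L := hL1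
  -- good template
  set AF : Finset (ℕ × (Fin m → Bool)) := (Finset.range n) ×ˢ (Finset.univ) with hAFdef
  set W : ℕ × (Fin m → Bool) → Fin C → Fin m → Bool :=
    fun a c r => xor (s.getD (a.1 * L + (c:ℕ) * m + (r:ℕ)) false) (a.2 r) with hWdef
  have hAFcard : AF.card = n * 2 ^ m := by
    rw [hAFdef, Finset.card_product, Finset.card_range, Finset.card_univ]
    simp [Fintype.card_fun]
  obtain ⟨g, hg⟩ := exists_good AF W (by rw [hAFcard]; exact hcount)
  set t : List Bool := List.ofFn (fun i : Fin L =>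
    if h : (i:ℕ) < C * m then
      g ⟨(i:ℕ)/m, (Nat.div_lt_iff_lt_mul hm0).mpr h⟩ ⟨(i:ℕ)%m, Nat.mod_lt _ hm0⟩
    else false) with htdef
  have ht : t.length = L := by rw [htdef, List.length_ofFn]
  have htget : ∀ (c : Fin C) (r : Fin m),
      t[(c:ℕ) * m + (r:ℕ)]'(by
        rw [ht]
        have h1 : ((c:ℕ)+1) * m ≤ C * m := Nat.mul_le_mul_right m c.isLt
        have h2 := Nat.div_mul_le_self L m
        rw [← hCdef] at h2
        have h3 : ((c:ℕ)+1) * m = (c:ℕ)*m + m := by ring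
        have := r.isLt
        omega) = g c r := by
    intro c r
    have hlt : (c:ℕ) * m + (r:ℕ) < C * m := by
      have h1 : ((c:ℕ)+1) * m ≤ C * m := Nat.mul_le_mul_right m c.isLt
      have h3 : ((c:ℕ)+1) * m = (c:ℕ)*m + m := by ring
      have := r.isLt
      omega
    simp only [htdef, List.getElem_ofFn]
    rw [dif_pos hlt]
    have e1 : ((c:ℕ) * m + (r:ℕ)) / m = (c:ℕ) := by
      rw [add_comm, Nat.add_mul_div_right _ _ hm0, Nat.div_eq_of_lt r.isLt]
      omega
    have e2 : ((c:ℕ) * m + (r:ℕ)) % m = (r:ℕ) := by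
      rw [Nat.mul_add_mod', Nat.mod_eq_of_lt r.isLt]
    have f1 : (⟨((c:ℕ) * m + (r:ℕ)) / m, (Nat.div_lt_iff_lt_mul hm0).mpr hlt⟩ : Fin C) = c :=
      Fin.ext e1
    have f2 : (⟨((c:ℕ) * m + (r:ℕ)) % m, Nat.mod_lt _ hm0⟩ : Fin m) = r := Fin.ext e2
    rw [f1, f2]
  -- verify Mixed
  refine ⟨t, by rw [ht, hLdef], ?_⟩
  intro p hp j hj
  rw [← hmdef] at hp
  rw [← hddef] at hj
  have htL : 0 < t.length := by rw [ht]; exact hL0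
  have hmu : (mu s t).length = n := by rw [mu_length s t htL]; exact hs
  rw [hmu] at hj
  set q := (j + L - 1) / L with hqdef
  have hq1 : j ≤ q * L := ceil_div_ge j L hL0
  have hq2 : q * L < j + L := ceil_div_lt j L hL0
  have hqle : q ≤ q * L := Nat.le_mul_of_pos_right q hL0
  have hqn : q < n := by omega
  set P : Fin m → Bool := fun r => p[(r:ℕ)]'(by rw [hp]; exact r.isLt) with hPdef
  obtain ⟨c, hc⟩ := hg (q, P) (by
    rw [hAFdef]
    simp only [Finset.mem_product, Finset.mem_range, Finset.mem_univ, and_true]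
    exact hqn)
  have hcm1 : ((c:ℕ)+1) * m ≤ C * m := Nat.mul_le_mul_right m c.isLt
  have hcm2 : ((c:ℕ)+1) * m = (c:ℕ)*m + m := by ring
  have hCmL : C * m ≤ L := by
    have h1 := Nat.div_mul_le_self L m
    rw [← hCdef] at h1
    exact h1
  refine ⟨q * L + (c:ℕ) * m, by omega, by omega, ?_⟩
  rw [← hmdef]
  apply List.ext_getElem
  · rw [List.length_take, List.length_drop, hmu, hp]
    omega
  · intro r h1 h2
    have hr : r < m := by rw [hp] at h2; exact h2
    have him : q*L + (c:ℕ)*m + r < n := by omega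
    have hslen : q*L + (c:ℕ)*m + r < s.length := by rw [hs]; exact him
    rw [List.getElem_take, List.getElem_drop]
    rw [mu_getElem s t htL _ hslen]
    have hmod : (q*L + (c:ℕ)*m + r) % t.length = (c:ℕ)*m + r := by
      rw [ht]
      rw [show q*L + (c:ℕ)*m + r = ((c:ℕ)*m + r) + q*L by ring]
      rw [Nat.add_mul_mod_self_right, Nat.mod_eq_of_lt (by omega)]
    simp only [hmod]
    have ht2 : t[(c:ℕ)*m + r]'(by rw [ht]; omega) = g c ⟨r, hr⟩ := by
      simpa using htget c ⟨r, hr⟩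
    rw [ht2]
    have hW := congrFun hc ⟨r, hr⟩
    rw [hWdef] at hW
    simp only at hW
    rw [hW]
    have hgd : s.getD (q*L + (c:ℕ)*m + r) false = s[q*L + (c:ℕ)*m + r]'hslen :=
      List.getD_eq_getElem s false hslen
    rw [hgd]
    have hPr : P ⟨r, hr⟩ = p[r]'h2 := rfl
    rw [hPr]
    rw [← Bool.xor_assoc, Bool.xor_self, Bool.false_xor]
end
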